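/- Let d be a negative-type distance on X, p ≥ 2, and A, OPT ⊆ X with k/2 ≤ |A|, |OPT| ≤ k, 8p ≤ k, and d(A) ≤ (1/50)·d(OPT) ≤ d(OPT). Let P₁,...,P_m and λ_i > 0 satisfy the conditions of the generalized exchange lemma for A and OPT (with P_i ⊆ A ∪ OPT), and let λ = ∑_i λ_i ≤ 3k. Then ∑_i λ_i·(d(A Δ P_i) − d(A)) ≥ (1/8)·d(OPT), and hence (1/λ)·∑_i λ_i·(d(A Δ P_i) − d(A)) ≥ (1/24k)·d(OPT). -/
import Mathlib

open Finset

/-- `d` is a distance of negative type on the finite type `X`. -/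
def NegType {X : Type*} [Fintype X] (d : X → X → ℝ) : Prop :=
  ∀ x : X → ℝ, ∑ i, x i = 0 → ∑ i, ∑ j, x i * d i j * x j ≤ 0

/-- The dispersion of a finite set: sum of distances over unordered pairs. -/
noncomputable def disp {X : Type*} (d : X → X → ℝ) (A : Finset X) : ℝ :=
  (∑ a ∈ A, ∑ b ∈ A, d a b) / 2

/-- Sum of all distances between two sets. -/
def dsum {X : Type*} (d : X → X → ℝ) (A B : Finset X) : ℝ :=
  ∑ a ∈ A, ∑ b ∈ B, d a b

section aux
variable {X : Type*} [Fintype X] [DecidableEq X] (d : X → X → ℝ)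

lemma dsum_nonneg (hnonneg : ∀ a b, 0 ≤ d a b) (A B : Finset X) : 0 ≤ dsum d A B :=
  Finset.sum_nonneg fun _ _ => Finset.sum_nonneg fun _ _ => hnonneg _ _

lemma disp_nonneg (hnonneg : ∀ a b, 0 ≤ d a b) (A : Finset X) : 0 ≤ disp d A :=
  div_nonneg (Finset.sum_nonneg fun _ _ => Finset.sum_nonneg fun _ _ => hnonneg _ _) (by norm_num)

lemma dsum_swap (A B : Finset X) : dsum d A B = ∑ b ∈ B, ∑ a ∈ A, d a b := Finset.sum_comm

lemma dsum_comm (hsymm : ∀ a b, d a b = d b a) (A B : Finset X) : dsum d A B = dsum d B A := by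
  rw [dsum_swap]
  exact Finset.sum_congr rfl fun b _ => Finset.sum_congr rfl fun a _ => hsymm a b

lemma dsum_self (A : Finset X) : dsum d A A = 2 * disp d A := by
  unfold dsum disp; ring

lemma dsum_union_right (A B C : Finset X) (h : Disjoint B C) :
    dsum d A (B ∪ C) = dsum d A B + dsum d A C := by
  unfold dsum
  rw [← Finset.sum_add_distrib]
  exact Finset.sum_congr rfl fun a _ => Finset.sum_union h

lemma dsum_union_left (A B C : Finset X) (h : Disjoint A B) :
    dsum d (A ∪ B) C = dsum d A C + dsum d B C := by
  unfold dsum; exact Finset.sum_union h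

lemma dsum_mono_right (hnonneg : ∀ a b, 0 ≤ d a b) (A : Finset X) {B C : Finset X} (h : B ⊆ C) :
    dsum d A B ≤ dsum d A C :=
  Finset.sum_le_sum fun a _ => Finset.sum_le_sum_of_subset_of_nonneg h (fun b _ _ => hnonneg a b)

lemma disp_union (hsymm : ∀ a b, d a b = d b a) (U V : Finset X) (h : Disjoint U V) :
    disp d (U ∪ V) = disp d U + disp d V + dsum d U V := by
  have e : (∑ a ∈ U ∪ V, ∑ b ∈ U ∪ V, d a b)
      = dsum d U U + dsum d U V + (dsum d V U + dsum d V V) := by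
    rw [Finset.sum_union h]
    unfold dsum
    rw [← Finset.sum_add_distrib, ← Finset.sum_add_distrib]
    congr 1 <;> exact Finset.sum_congr rfl fun a _ => Finset.sum_union h
  unfold disp
  rw [e, dsum_comm d hsymm V U]
  unfold dsum
  ring

/-- key identity for symmetric difference -/
lemma disp_symmDiff (hsymm : ∀ a b, d a b = d b a) (A Pi : Finset X) :
    disp d (symmDiff A Pi) - disp d A
      = disp d (Pi \ A) + disp d (A ∩ Pi) + dsum d A (Pi \ A)
        - dsum d (A ∩ Pi) (Pi \ A) - dsum d A (A ∩ Pi) := by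
  have h1 : symmDiff A Pi = (A \ Pi) ∪ (Pi \ A) := by
    rw [symmDiff_def, Finset.sup_eq_union]
  have hd1 : Disjoint (A \ Pi) (Pi \ A) := by
    exact Finset.disjoint_left.2 (by intro a ha hb; simp at ha hb; tauto)
  have h2 : A = (A \ Pi) ∪ (A ∩ Pi) := by
    ext a; simp [Finset.mem_union, Finset.mem_sdiff, Finset.mem_inter]; tauto
  have hd2 : Disjoint (A \ Pi) (A ∩ Pi) := by
    exact Finset.disjoint_left.2 (by intro a ha hb; simp at ha hb; tauto)
  have e1 : disp d (symmDiff A Pi) = disp d (A \ Pi) + disp d (Pi \ A) + dsum d (A \ Pi) (Pi \ A) := by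
    rw [h1, disp_union d hsymm _ _ hd1]
  have e2 : disp d A = disp d (A \ Pi) + disp d (A ∩ Pi) + dsum d (A \ Pi) (A ∩ Pi) := by
    conv_lhs => rw [h2]
    rw [disp_union d hsymm _ _ hd2]
  have e3 : dsum d A (Pi \ A) = dsum d (A \ Pi) (Pi \ A) + dsum d (A ∩ Pi) (Pi \ A) := by
    rw [← dsum_union_left d _ _ _ hd2, ← h2]
  have e4 : dsum d A (A ∩ Pi) = dsum d (A \ Pi) (A ∩ Pi) + 2 * disp d (A ∩ Pi) := by
    rw [← dsum_self, ← dsum_union_left d _ _ _ hd2, ← h2]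
  rw [e1, e2]
  linarith [e3, e4]

end aux

section aux2
variable {X : Type*} [Fintype X] [DecidableEq X] (d : X → X → ℝ)

lemma ind_pair (S T : Finset X) :
    ∑ i, ∑ j, (if i ∈ S then (1:ℝ) else 0) * d i j * (if j ∈ T then (1:ℝ) else 0)
      = dsum d S T := by
  have h1 : ∀ i j : X, (if i ∈ S then (1:ℝ) else 0) * d i j * (if j ∈ T then (1:ℝ) else 0)
      = if i ∈ S then (if j ∈ T then d i j else 0) else 0 := by
    intro i j; split <;> split <;> simp
  simp_rw [h1]
  have h2 : ∀ i : X, (∑ j, if i ∈ S then (if j ∈ T then d i j else 0) else 0)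
      = if i ∈ S then ∑ j, (if j ∈ T then d i j else 0) else 0 := by
    intro i; split <;> simp
  simp_rw [h2, Finset.sum_ite_mem, Finset.univ_inter]
  rfl

lemma quad (hsymm : ∀ a b, d a b = d b a) (hneg : NegType d) (U V W : Finset X) (a b c : ℝ)
    (h : a * U.card + b * V.card + c * W.card = 0) :
    a^2 * dsum d U U + b^2 * dsum d V V + c^2 * dsum d W W
      + 2*a*b * dsum d U V + 2*a*c * dsum d U W + 2*b*c * dsum d V W ≤ 0 := by
  set f : X → ℝ := fun x => a * (if x ∈ U then 1 else 0) + b * (if x ∈ V then 1 else 0)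
      + c * (if x ∈ W then 1 else 0) with hf
  have hsum : ∑ i, f i = 0 := by
    simp only [hf, Finset.sum_add_distrib, ← Finset.mul_sum, Finset.sum_ite_mem,
      Finset.univ_inter, Finset.sum_const, nsmul_eq_mul, mul_one]
    linarith [h]
  have hq := hneg f hsum
  have expand : (∑ i, ∑ j, f i * d i j * f j) =
      a^2 * dsum d U U + b^2 * dsum d V V + c^2 * dsum d W W
        + (a*b) * dsum d U V + (a*b) * dsum d V U + (a*c) * dsum d U W + (a*c) * dsum d W U
        + (b*c) * dsum d V W + (b*c) * dsum d W V := by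
    rw [← ind_pair d U U, ← ind_pair d V V, ← ind_pair d W W, ← ind_pair d U V,
      ← ind_pair d V U, ← ind_pair d U W, ← ind_pair d W U, ← ind_pair d V W, ← ind_pair d W V]
    simp only [Finset.mul_sum, ← Finset.sum_add_distrib]
    apply Finset.sum_congr rfl; intro i _
    apply Finset.sum_congr rfl; intro j _
    simp only [hf]; ring
  rw [expand] at hq
  rw [dsum_comm d hsymm V U, dsum_comm d hsymm W U, dsum_comm d hsymm W V] at hq
  linarith [hq]

lemma transfer {m : ℕ} (lam : Fin m → ℝ) (Q : Fin m → Finset X) (R : Finset X) (c : ℝ)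
    (hpt : ∀ x, ∑ i, lam i * (if x ∈ Q i then (1:ℝ) else 0) = c * (if x ∈ R then (1:ℝ) else 0))
    (f : X → ℝ) :
    ∑ i, lam i * ∑ x ∈ Q i, f x = c * ∑ x ∈ R, f x := by
  have key : ∀ x : X, (∑ i, lam i * (if x ∈ Q i then f x else 0)) = c * (if x ∈ R then f x else 0) := by
    intro x
    have e1 : (∑ i, lam i * (if x ∈ Q i then f x else 0))
        = (∑ i, lam i * (if x ∈ Q i then (1:ℝ) else 0)) * f x := by
      rw [Finset.sum_mul]
      apply Finset.sum_congr rfl; intro i _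
      split <;> ring
    rw [e1, hpt x]
    split <;> ring
  have e2 : ∀ i, lam i * ∑ x ∈ Q i, f x = ∑ x : X, lam i * (if x ∈ Q i then f x else 0) := by
    intro i
    simp only [mul_ite, mul_zero, Finset.sum_ite_mem, Finset.univ_inter, Finset.mul_sum]
  simp_rw [e2]
  rw [Finset.sum_comm]
  simp_rw [key]
  simp only [mul_ite, mul_zero, Finset.sum_ite_mem, Finset.univ_inter, Finset.mul_sum]

end aux2

set_option maxHeartbeats 1000000 in
theorem stmt_19 {X : Type*} [Fintype X] [DecidableEq X] (d : X → X → ℝ)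
    (hsymm : ∀ a b, d a b = d b a) (hnonneg : ∀ a b, 0 ≤ d a b)
    (hdiag : ∀ a, d a a = 0) (hneg : NegType d)
    (p k : ℕ) (hp : 2 ≤ p) (hpk : 8 * p ≤ k)
    (A OPT : Finset X)
    (hAlow : (k : ℝ) / 2 ≤ A.card) (hAup : A.card ≤ k)
    (hOlow : (k : ℝ) / 2 ≤ OPT.card) (hOup : OPT.card ≤ k)
    (hsmall : disp d A ≤ 1 / 50 * disp d OPT)
    (m : ℕ) (P : Fin m → Finset X) (lam : Fin m → ℝ)
    (hPne : ∀ i, (P i).Nonempty) (hlam : ∀ i, 0 < lam i)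
    (hPA : ∀ i, (P i ∩ A).card ≤ p) (hPO : ∀ i, (P i ∩ OPT).card ≤ p - 1)
    (hPsub : ∀ i, P i ⊆ A ∪ OPT)
    (hcov : ∀ x : X, ∑ i, lam i * (if x ∈ P i then (1 : ℝ) else 0)
      = (p : ℝ) / ((p : ℝ) - 1) * (if x ∈ A \ OPT then (1 : ℝ) else 0)
        + (if x ∈ OPT \ A then (1 : ℝ) else 0))
    (hlamsum : ∑ i, lam i ≤ 3 * k) :
    (∑ i, lam i * (disp d (symmDiff A (P i)) - disp d A) ≥ 1 / 8 * disp d OPT) ∧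
    (1 / (∑ i, lam i) * ∑ i, lam i * (disp d (symmDiff A (P i)) - disp d A)
      ≥ 1 / (24 * k) * disp d OPT) := by
  -- basic positivity
  set t : ℝ := (p : ℝ) with hts
  have ht : (2:ℝ) ≤ t := by rw [hts]; exact_mod_cast hp
  have hkt : 8 * t ≤ (k:ℝ) := by rw [hts]; exact_mod_cast hpk
  have kpos : (0:ℝ) < k := by linarith
  have hA0 : (0:ℝ) < A.card := by linarith
  have hO0 : (0:ℝ) < OPT.card := by linarith
  set q : ℝ := t / (t - 1) with hqdef
  have ht1 : (0:ℝ) < t - 1 := by linarith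
  have hq' : q * (t - 1) = t := by rw [hqdef]; field_simp
  have hq0 : 0 < q := div_pos (by linarith) ht1
  have hq2 : q ≤ 2 := by rw [div_le_iff₀ ht1]; linarith
  set mu : ℝ := (4 * t - 2) / k with hmudef
  have hmu0 : 0 ≤ mu := div_nonneg (by linarith) (le_of_lt kpos)
  have hmub : mu * (8 * t) ≤ 4 * t - 2 := by
    rw [hmudef, div_mul_eq_mul_div, div_le_iff₀ kpos]
    nlinarith
  have hmu1 : mu ≤ 1 / 2 := by
    nlinarith
  have hAupR : (A.card : ℝ) ≤ k := by exact_mod_cast hAup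
  have hOupR : (OPT.card : ℝ) ≤ k := by exact_mod_cast hOup
  have dAnn := disp_nonneg d hnonneg A
  have dOnn := disp_nonneg d hnonneg OPT
  -- pointwise cover identities
  have hTpt : ∀ x, ∑ i, lam i * (if x ∈ P i \ A then (1:ℝ) else 0)
      = 1 * (if x ∈ OPT \ A then (1:ℝ) else 0) := by
    intro x
    by_cases hx : x ∈ A
    · simp [Finset.mem_sdiff, hx]
    · have e : ∀ i : Fin m, (if x ∈ P i \ A then (1:ℝ) else 0) = (if x ∈ P i then (1:ℝ) else 0) := by
        intro i; simp [Finset.mem_sdiff, hx]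
      simp_rw [e]
      rw [hcov x]
      simp [Finset.mem_sdiff, hx]
  have hSpt : ∀ x, ∑ i, lam i * (if x ∈ A ∩ P i then (1:ℝ) else 0)
      = q * (if x ∈ A \ OPT then (1:ℝ) else 0) := by
    intro x
    by_cases hx : x ∈ A
    · have e : ∀ i : Fin m, (if x ∈ A ∩ P i then (1:ℝ) else 0) = (if x ∈ P i then (1:ℝ) else 0) := by
        intro i; simp [Finset.mem_inter, hx]
      simp_rw [e]
      rw [hcov x]
      simp [Finset.mem_sdiff, hx]
    · simp [Finset.mem_inter, Finset.mem_sdiff, hx]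
  -- lambda-weighted sums
  have hsumT : ∑ i, lam i * dsum d A (P i \ A) = dsum d A (OPT \ A) := by
    have h := transfer lam (fun i => P i \ A) (OPT \ A) 1 hTpt (fun b => ∑ a ∈ A, d a b)
    simp_rw [← dsum_swap] at h
    linarith [h]
  have hsumS : ∑ i, lam i * dsum d A (A ∩ P i) = q * dsum d A (A \ OPT) := by
    have h := transfer lam (fun i => A ∩ P i) (A \ OPT) q hSpt (fun b => ∑ a ∈ A, d a b)
    simp_rw [← dsum_swap] at h
    exact h
  -- per-swap lower bound
  have key : ∀ i, disp d (symmDiff A (P i)) - disp d A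
      ≥ (1 - mu) * dsum d A (P i \ A) - (1 + mu) * dsum d A (A ∩ P i) := by
    intro i
    set Si := A ∩ P i with hSi
    set Ti := P i \ A with hTi
    have hScard : (Si.card : ℝ) ≤ t := by
      rw [hts, hSi, Finset.inter_comm]; exact_mod_cast hPA i
    have hTcard : (Ti.card : ℝ) ≤ t - 1 := by
      have hsub : Ti ⊆ P i ∩ OPT := by
        intro x hx
        rw [hTi, Finset.mem_sdiff] at hx
        rw [Finset.mem_inter]
        refine ⟨hx.1, ?_⟩
        rcases Finset.mem_union.1 (hPsub i hx.1) with h | h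
        · exact absurd h hx.2
        · exact h
      have h1 : (Ti.card : ℝ) ≤ ((P i ∩ OPT).card : ℝ) := by
        exact_mod_cast Finset.card_le_card hsub
      have h2 : ((P i ∩ OPT).card : ℝ) ≤ (p : ℝ) - 1 := by
        have := hPO i
        have hc : ((p - 1 : ℕ) : ℝ) = (p:ℝ) - 1 := by
          have : 1 ≤ p := le_trans (by norm_num) hp
          push_cast [Nat.cast_sub this]
          ring
        rw [← hc]; exact_mod_cast this
      linarith
    set mui : ℝ := ((Si.card : ℝ) + Ti.card) / A.card with hmui
    have hmui0 : 0 ≤ mui := div_nonneg (by positivity) (le_of_lt hA0)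
    have hmuile : mui ≤ mu := by
      rw [hmui, hmudef, div_le_div_iff₀ hA0 kpos]
      nlinarith
    have hquad := quad d hsymm hneg Si Ti A 1 1 (-mui)
      (by rw [hmui]; field_simp [ne_of_gt hA0]; try ring)
    have hid := disp_symmDiff d hsymm A (P i)
    rw [dsum_comm d hsymm Si A, dsum_comm d hsymm Ti A] at hquad
    rw [dsum_self d Si, dsum_self d Ti] at hquad
    have hATnn := dsum_nonneg d hnonneg A Ti
    have hASnn := dsum_nonneg d hnonneg A Si
    have hAAnn := dsum_nonneg d hnonneg A A
    have hdSnn := disp_nonneg d hnonneg Si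
    have hdTnn := disp_nonneg d hnonneg Ti
    rw [← hSi, ← hTi] at hid
    have p1 : mui * dsum d A Ti ≤ mu * dsum d A Ti := mul_le_mul_of_nonneg_right hmuile hATnn
    have p2 : mui * dsum d A Si ≤ mu * dsum d A Si := mul_le_mul_of_nonneg_right hmuile hASnn
    have p3 : 0 ≤ mui ^ 2 * dsum d A A := mul_nonneg (sq_nonneg mui) hAAnn
    linarith [hid, hquad, p1, p2, p3, hATnn, hASnn, hdSnn, hdTnn]
  -- sum the per-swap bounds
  have hG : ∑ i, lam i * (disp d (symmDiff A (P i)) - disp d A)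
      ≥ (1 - mu) * dsum d A (OPT \ A) - (1 + mu) * (q * dsum d A (A \ OPT)) := by
    have h1 : ∑ i, lam i * (disp d (symmDiff A (P i)) - disp d A)
        ≥ ∑ i, lam i * ((1 - mu) * dsum d A (P i \ A) - (1 + mu) * dsum d A (A ∩ P i)) := by
      apply Finset.sum_le_sum
      intro i _
      exact mul_le_mul_of_nonneg_left (key i) (le_of_lt (hlam i))
    have h2 : ∑ i, lam i * ((1 - mu) * dsum d A (P i \ A) - (1 + mu) * dsum d A (A ∩ P i))
        = (1 - mu) * ∑ i, lam i * dsum d A (P i \ A)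
          - (1 + mu) * ∑ i, lam i * dsum d A (A ∩ P i) := by
      rw [Finset.mul_sum, Finset.mul_sum, ← Finset.sum_sub_distrib]
      apply Finset.sum_congr rfl; intro i _; ring
    rw [h2, hsumT, hsumS] at h1
    exact h1
  -- set-level estimates
  have hOsplit : dsum d A OPT = dsum d A (OPT ∩ A) + dsum d A (OPT \ A) := by
    rw [← dsum_union_right d A _ _ (Finset.disjoint_left.2 (by intro x hx hy; simp at hx hy; tauto))]
    congr 1
    ext x; simp [Finset.mem_union, Finset.mem_inter, Finset.mem_sdiff]; tauto
  have hb1 : dsum d A (OPT ∩ A) ≤ 2 * disp d A := by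
    rw [← dsum_self d A]
    exact dsum_mono_right d hnonneg A (Finset.inter_subset_right)
  have hb2 : dsum d A (A \ OPT) ≤ 2 * disp d A := by
    rw [← dsum_self d A]
    exact dsum_mono_right d hnonneg A (Finset.sdiff_subset)
  have hb3 : (disp d A + disp d OPT) / 2 ≤ dsum d A OPT := by
    have hquad := quad d hsymm hneg A OPT (∅ : Finset X) (OPT.card : ℝ) (-(A.card : ℝ)) 0
      (by simp; ring)
    rw [dsum_self d A, dsum_self d OPT] at hquad
    have h0 : dsum d (∅ : Finset X) (∅ : Finset X) = 0 := by simp [dsum]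
    have h1 : dsum d A (∅ : Finset X) = 0 := by simp [dsum]
    have h2 : dsum d OPT (∅ : Finset X) = 0 := by simp [dsum]
    rw [h0, h1, h2] at hquad
    nlinarith [mul_nonneg (by linarith : (0:ℝ) ≤ 2*(OPT.card:ℝ) - A.card) (mul_nonneg (le_of_lt hO0) dAnn),
      mul_nonneg (by linarith : (0:ℝ) ≤ 2*(A.card:ℝ) - OPT.card) (mul_nonneg (le_of_lt hA0) dOnn),
      mul_pos hA0 hO0]
  have hDTnn := dsum_nonneg d hnonneg A (OPT \ A)
  have hDSnn := dsum_nonneg d hnonneg A (A \ OPT)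
  -- first conclusion
  have part1 : ∑ i, lam i * (disp d (symmDiff A (P i)) - disp d A) ≥ 1 / 8 * disp d OPT := by
    have hDT : dsum d A (OPT \ A) ≥ dsum d A OPT - 2 * disp d A := by linarith
    have step : (1 - mu) * dsum d A (OPT \ A) - (1 + mu) * (q * dsum d A (A \ OPT))
        ≥ (1 - mu) * ((disp d A + disp d OPT) / 2 - 2 * disp d A)
          - (1 + mu) * (q * (2 * disp d A)) := by
      have hm1 : 0 ≤ 1 - mu := by linarith
      have t1 : (1 - mu) * dsum d A (OPT \ A) ≥ (1 - mu) * ((disp d A + disp d OPT) / 2 - 2 * disp d A) := by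
        apply mul_le_mul_of_nonneg_left _ hm1
        linarith
      have t2 : (1 + mu) * (q * dsum d A (A \ OPT)) ≤ (1 + mu) * (q * (2 * disp d A)) := by
        apply mul_le_mul_of_nonneg_left _ (by linarith : (0:ℝ) ≤ 1 + mu)
        exact mul_le_mul_of_nonneg_left hb2 (le_of_lt hq0)
      linarith
    have final : (1 - mu) * ((disp d A + disp d OPT) / 2 - 2 * disp d A)
        - (1 + mu) * (q * (2 * disp d A)) ≥ 1 / 8 * disp d OPT := by
      set C : ℝ := (1 + mu) * q with hCdef
      have hC0 : 0 ≤ C := mul_nonneg (by linarith) (le_of_lt hq0)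
      have hc1 : C * (4 * (t - 1)) ≤ 6 * t - 1 := by
        have e : C * (4 * (t - 1)) = 4 * (1 + mu) * (q * (t - 1)) := by rw [hCdef]; ring
        rw [e, hq']
        nlinarith [hmub]
      have hC114 : 4 * C ≤ 11 := by nlinarith [hc1, ht, hC0, ht1]
      have hcoef : (0:ℝ) ≤ 94 * (1 - mu) - 8 * C - 25 := by linarith
      have hprod := mul_nonneg dOnn hcoef
      have e2 : (1 + mu) * (q * (2 * disp d A)) = 2 * C * disp d A := by rw [hCdef]; ring
      rw [e2]
      have s3 : 2 * C * disp d A ≤ 2 * C * (1 / 50 * disp d OPT) :=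
        mul_le_mul_of_nonneg_left hsmall (by linarith)
      have hm1 : (0:ℝ) ≤ 1 - mu := by linarith
      have s1 : (1 - mu) * (47 / 100 * disp d OPT)
          ≤ (1 - mu) * ((disp d A + disp d OPT) / 2 - 2 * disp d A) :=
        mul_le_mul_of_nonneg_left (by linarith) hm1
      nlinarith [hprod, s1, s3]
    linarith
  refine ⟨part1, ?_⟩
  -- second conclusion
  by_cases hm : m = 0
  · subst hm
    have hz : ∑ i : Fin 0, lam i * (disp d (symmDiff A (P i)) - disp d A) = 0 := by simp
    have hO : disp d OPT = 0 := by
      rw [hz] at part1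
      linarith
    simp [hz, hO]
  · have hlpos : 0 < ∑ i, lam i := by
      apply Finset.sum_pos (fun i _ => hlam i)
      simpa using Finset.univ_nonempty_iff.2 (Fin.pos_iff_nonempty.1 (Nat.pos_of_ne_zero hm))
    have hGnn : 0 ≤ ∑ i, lam i * (disp d (symmDiff A (P i)) - disp d A) := by linarith
    have h1 : 1 / (∑ i, lam i) ≥ 1 / (3 * k) := by
      apply one_div_le_one_div_of_le hlpos hlamsum
    have h2 : 1 / (∑ i, lam i) * ∑ i, lam i * (disp d (symmDiff A (P i)) - disp d A)
        ≥ 1 / (3 * k) * ∑ i, lam i * (disp d (symmDiff A (P i)) - disp d A) :=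
      mul_le_mul_of_nonneg_right h1 hGnn
    have h3 : 1 / (3 * (k:ℝ)) * ∑ i, lam i * (disp d (symmDiff A (P i)) - disp d A)
        ≥ 1 / (3 * k) * (1 / 8 * disp d OPT) := by
      apply mul_le_mul_of_nonneg_left part1
      positivity
    have h4 : 1 / (3 * (k:ℝ)) * (1 / 8 * disp d OPT) = 1 / (24 * k) * disp d OPT := by ring
    linarith
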